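/- Let a, b : ℝ → ℝ be continuous and suppose there exist constants M, δ > 0 such that |a(t)| + |b(t)| ≤ M and 4 b(t) + a(t)² ≤ −δ for all t ∈ ℝ. Let U(t,s) denote the evolution family on ℝ² of the planar linear system x'(t) = −a(t) x(t) + y(t), y'(t) = −b(t) x(t) (i.e. U(t,s)v is the value at time t of the unique solution taking the value v at time s). Then U is exponentially bounded and has an exponential dichotomy: there exist constants N, β > 0 and projections P(t) on ℝ², with t ↦ P(t)v bounded and continuous for each v, such that P(t)U(t,s) = U(t,s)P(s) for s ≤ t, the restriction of U(t,s) to the kernel of P(s) is a bijection onto the kernel of P(t), ‖U(t,s)P(s)v‖ ≤ N e^{−β(t−s)} ‖v‖ for s ≤ t, and the inverse U_Q(s,t) of this restriction satisfies ‖U_Q(s,t)(Id − P(t))v‖ ≤ N e^{−β(t−s)} ‖v‖ for s ≤ t. -/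

import Mathlib

/-!
Along solutions, `V(x, y) = xy` increases at rate at least `κ ‖(x, y)‖²`: its derivative is the
quadratic form `y² - axy - bx²`, positive definite because `4b + a² ≤ -δ`. So `xy ≤ 0` is invariant
backwards and `xy ≥ 0` forwards in time, and by compactness of the unit circle there are solutions
`p` staying in `xy ≤ 0` and `q` staying in `xy ≥ 0` for all time. Integrating the derivative over
unit time intervals, on which solutions grow by at most a fixed factor, gives `θ ‖p‖² ≤ -V(p)` and
`θ ‖q‖² ≤ V(q)` for a fixed `θ > 0`. This makes `p` and `q` uniformly transversal and, since
`V e^{±κt}` is monotone, gives decay of `p` forwards and of `q` backwards at rate `κ / 2`. The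
dichotomy projects onto the line of `p t` along the line of `q t`.
-/

open Real Filter

section Gronwall

variable {E : Type*} [NormedAddCommGroup E] [NormedSpace ℝ E] {g g' : ℝ → E} {c : ℝ}

theorem norm_le_exp_mul_norm_of_norm_deriv_le (hg : ∀ t, HasDerivAt g (g' t) t)
    (hb : ∀ t, ‖g' t‖ ≤ c * ‖g t‖) {σ τ : ℝ} (h : σ ≤ τ) :
    ‖g τ‖ ≤ exp (c * (τ - σ)) * ‖g σ‖ := by
  have := norm_le_gronwallBound_of_norm_deriv_right_le (ε := 0)
    (fun t _ => (hg t).continuousAt.continuousWithinAt) (fun t _ => (hg t).hasDerivWithinAt)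
    le_rfl (fun t _ => by simpa using hb t) τ ⟨h, le_rfl⟩
  rwa [gronwallBound_ε0, mul_comm] at this

theorem norm_le_exp_mul_norm_of_norm_deriv_le_rev (hg : ∀ t, HasDerivAt g (g' t) t)
    (hb : ∀ t, ‖g' t‖ ≤ c * ‖g t‖) {σ τ : ℝ} (h : σ ≤ τ) :
    ‖g σ‖ ≤ exp (c * (τ - σ)) * ‖g τ‖ := by
  have hrev (t : ℝ) : HasDerivAt (fun t => g (σ + τ - t)) (-g' (σ + τ - t)) t := by
    have := (hg (σ + τ - t)).scomp t ((hasDerivAt_id t).const_sub (σ + τ))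
    simpa [Function.comp_def] using this
  simpa using norm_le_exp_mul_norm_of_norm_deriv_le hrev (fun t => by simpa using hb _) h

theorem eq_zero_of_norm_deriv_le (hg : ∀ t, HasDerivAt g (g' t) t)
    (hb : ∀ t, ‖g' t‖ ≤ c * ‖g t‖) {r : ℝ} (hr : g r = 0) (t : ℝ) : g t = 0 := by
  rw [← norm_le_zero_iff]
  rcases le_total r t with h | h
  · simpa [hr] using norm_le_exp_mul_norm_of_norm_deriv_le hg hb h
  · simpa [hr] using norm_le_exp_mul_norm_of_norm_deriv_le_rev hg hb h

end Gronwall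

structure IsEvolutionFamily {E : Type*} [NormedAddCommGroup E] [NormedSpace ℝ E]
    (A : ℝ → E →L[ℝ] E) (U : ℝ → ℝ → E →L[ℝ] E) : Prop where
  apply_self : ∀ s, U s s = ContinuousLinearMap.id ℝ E
  hasDerivAt : ∀ s v t, HasDerivAt (fun τ => U τ s v) (A t (U t s v)) t

namespace IsEvolutionFamily

variable {E : Type*} [NormedAddCommGroup E] [NormedSpace ℝ E]
  {A : ℝ → E →L[ℝ] E} {U : ℝ → ℝ → E →L[ℝ] E} {c : ℝ}

theorem norm_apply_le (hU : IsEvolutionFamily A U) (hA : ∀ t, ‖A t‖ ≤ c) (s : ℝ) (v : E)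
    {σ τ : ℝ} (h : σ ≤ τ) : ‖U τ s v‖ ≤ exp (c * (τ - σ)) * ‖U σ s v‖ :=
  norm_le_exp_mul_norm_of_norm_deriv_le (hU.hasDerivAt s v)
    (fun t => (A t).le_of_opNorm_le (hA t) _) h

theorem norm_apply_le_rev (hU : IsEvolutionFamily A U) (hA : ∀ t, ‖A t‖ ≤ c) (s : ℝ) (v : E)
    {σ τ : ℝ} (h : σ ≤ τ) : ‖U σ s v‖ ≤ exp (c * (τ - σ)) * ‖U τ s v‖ :=
  norm_le_exp_mul_norm_of_norm_deriv_le_rev (hU.hasDerivAt s v)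
    (fun t => (A t).le_of_opNorm_le (hA t) _) h

theorem opNorm_le (hU : IsEvolutionFamily A U) (hA : ∀ t, ‖A t‖ ≤ c) {s t : ℝ} (h : s ≤ t) :
    ‖U t s‖ ≤ exp (c * (t - s)) :=
  (U t s).opNorm_le_bound (exp_pos _).le fun v => by
    simpa [hU.apply_self] using hU.norm_apply_le hA s v h

theorem apply_apply (hU : IsEvolutionFamily A U) (hA : ∀ t, ‖A t‖ ≤ c) (s r t : ℝ) (v : E) :
    U t r (U r s v) = U t s v := by
  refine sub_eq_zero.mp (eq_zero_of_norm_deriv_le (g := fun t => U t r (U r s v) - U t s v)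
    (fun t => ?_) (fun t => (A t).le_of_opNorm_le (hA t) _) (r := r) ?_ t)
  · exact ((hU.hasDerivAt r _ t).sub (hU.hasDerivAt s v t)).congr_deriv (map_sub _ _ _).symm
  · simp [hU.apply_self]

theorem apply_apply_swap (hU : IsEvolutionFamily A U) (hA : ∀ t, ‖A t‖ ≤ c) (s t : ℝ) (v : E) :
    U s t (U t s v) = v := by
  rw [hU.apply_apply hA, hU.apply_self]; rfl

theorem surjective (hU : IsEvolutionFamily A U) (hA : ∀ t, ‖A t‖ ≤ c) (s t : ℝ) :
    Function.Surjective (U t s) :=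
  fun w => ⟨U s t w, hU.apply_apply_swap hA t s w⟩

theorem continuous_apply (hU : IsEvolutionFamily A U) (s : ℝ) (v : E) :
    Continuous fun t => U t s v :=
  continuous_iff_continuousAt.mpr fun t => (hU.hasDerivAt s v t).continuousAt

end IsEvolutionFamily

section PlanarAlgebra

def wedge (v w : ℝ × ℝ) : ℝ := v.1 * w.2 - v.2 * w.1

def saddleForm (w : ℝ × ℝ) : ℝ := w.1 * w.2

noncomputable def projAlong (p q : ℝ × ℝ) : (ℝ × ℝ) →L[ℝ] (ℝ × ℝ) :=
  ((wedge p q)⁻¹ •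
    (q.2 • ContinuousLinearMap.fst ℝ ℝ ℝ - q.1 • ContinuousLinearMap.snd ℝ ℝ ℝ)).smulRight p

variable {p q : ℝ × ℝ}

theorem projAlong_apply (v : ℝ × ℝ) : projAlong p q v = (wedge v q / wedge p q) • p := by
  simp only [projAlong, wedge, ContinuousLinearMap.smulRight_apply, smul_apply, sub_apply,
    ContinuousLinearMap.coe_fst', ContinuousLinearMap.coe_snd', smul_eq_mul]
  ring_nf

theorem sq_norm_le_fst_sq_add_snd_sq (w : ℝ × ℝ) : ‖w‖ ^ 2 ≤ w.1 ^ 2 + w.2 ^ 2 := by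
  rw [Prod.norm_def, Real.norm_eq_abs, Real.norm_eq_abs]
  rcases le_total |w.1| |w.2| with h | h
  · rw [max_eq_right h, sq_abs]; nlinarith
  · rw [max_eq_left h, sq_abs]; nlinarith

theorem abs_saddleForm_le (w : ℝ × ℝ) : |saddleForm w| ≤ ‖w‖ ^ 2 := by
  rw [saddleForm, abs_mul, sq]
  exact mul_le_mul (norm_fst_le w) (norm_snd_le w) (abs_nonneg _) (norm_nonneg _)

theorem abs_wedge_le (v w : ℝ × ℝ) : |wedge v w| ≤ 2 * ‖v‖ * ‖w‖ := by
  have h₁ := mul_le_mul (norm_fst_le v) (norm_snd_le w) (norm_nonneg _) (norm_nonneg _)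
  have h₂ := mul_le_mul (norm_snd_le v) (norm_fst_le w) (norm_nonneg _) (norm_nonneg _)
  simp only [Real.norm_eq_abs] at h₁ h₂
  calc |wedge v w| ≤ |v.1 * w.2| + |v.2 * w.1| := abs_sub _ _
    _ ≤ 2 * ‖v‖ * ‖w‖ := by rw [abs_mul, abs_mul]; linarith

/-- `wedge p q ^ 2 = 4 (-p₁p₂) (q₁q₂) + (p₁q₂ + p₂q₁) ^ 2`. -/
theorem mul_le_abs_wedge {θ : ℝ} (hθ : 0 ≤ θ) (hp : θ * ‖p‖ ^ 2 ≤ -saddleForm p)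
    (hq : θ * ‖q‖ ^ 2 ≤ saddleForm q) : θ * (‖p‖ * ‖q‖) ≤ |wedge p q| := by
  have hprod := mul_le_mul hp hq (by positivity) ((by positivity : 0 ≤ θ * ‖p‖ ^ 2).trans hp)
  refine le_of_pow_le_pow_left₀ two_ne_zero (abs_nonneg _) ?_
  rw [sq_abs, wedge]
  unfold saddleForm at hprod
  nlinarith [sq_nonneg (p.1 * q.2 + p.2 * q.1)]

theorem wedge_smul_add_smul_left (α γ : ℝ) : wedge (α • p + γ • q) q = α * wedge p q := by
  simp only [wedge, Prod.fst_add, Prod.snd_add, Prod.smul_fst, Prod.smul_snd, smul_eq_mul]; ring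

theorem eq_smul_add_smul (h : wedge p q ≠ 0) (v : ℝ × ℝ) :
    v = (wedge v q / wedge p q) • p + (wedge p v / wedge p q) • q := by
  unfold wedge at h ⊢
  ext <;> simp only [Prod.fst_add, Prod.snd_add, Prod.smul_fst, Prod.smul_snd, smul_eq_mul] <;>
    rw [div_mul_eq_mul_div, div_mul_eq_mul_div, ← add_div, eq_div_iff h] <;> ring

theorem projAlong_smul_add_smul (h : wedge p q ≠ 0) (α γ : ℝ) :
    projAlong p q (α • p + γ • q) = α • p := by
  rw [projAlong_apply, wedge_smul_add_smul_left, mul_div_cancel_right₀ _ h]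

theorem sub_projAlong (h : wedge p q ≠ 0) (v : ℝ × ℝ) :
    v - projAlong p q v = (wedge p v / wedge p q) • q := by
  conv_lhs => rw [eq_smul_add_smul h v]
  rw [projAlong_smul_add_smul h, add_sub_cancel_left]

theorem projAlong_projAlong (h : wedge p q ≠ 0) (v : ℝ × ℝ) :
    projAlong p q (projAlong p q v) = projAlong p q v := by
  have := projAlong_smul_add_smul h (wedge v q / wedge p q) 0
  rwa [zero_smul, add_zero, ← projAlong_apply] at this

theorem projAlong_map (L : (ℝ × ℝ) →L[ℝ] (ℝ × ℝ)) (h : wedge p q ≠ 0)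
    (hL : wedge (L p) (L q) ≠ 0) (v : ℝ × ℝ) :
    projAlong (L p) (L q) (L v) = L (projAlong p q v) := by
  conv_lhs => rw [eq_smul_add_smul h v]
  rw [map_add, map_smul, map_smul, projAlong_smul_add_smul hL, projAlong_apply, map_smul]

theorem norm_projAlong_le {θ : ℝ} (hθ : 0 < θ) (htrans : θ * (‖p‖ * ‖q‖) ≤ |wedge p q|)
    (h : wedge p q ≠ 0) (v : ℝ × ℝ) : ‖projAlong p q v‖ ≤ 2 / θ * ‖v‖ := by
  rw [projAlong_apply, norm_smul, norm_div, Real.norm_eq_abs, Real.norm_eq_abs,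
    div_mul_eq_mul_div, div_le_iff₀ (abs_pos.mpr h)]
  calc |wedge v q| * ‖p‖ ≤ 2 * ‖v‖ * ‖q‖ * ‖p‖ := by gcongr; exact abs_wedge_le v q
    _ = 2 / θ * ‖v‖ * (θ * (‖p‖ * ‖q‖)) := by field_simp
    _ ≤ 2 / θ * ‖v‖ * |wedge p q| := by gcongr

theorem Continuous.wedge {α : Type*} [TopologicalSpace α] {f g : α → ℝ × ℝ} (hf : Continuous f)
    (hg : Continuous g) : Continuous fun x => wedge (f x) (g x) := by
  unfold _root_.wedge; fun_prop

theorem saddleForm_smul (c : ℝ) (w : ℝ × ℝ) : saddleForm (c • w) = c ^ 2 * saddleForm w := by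
  simp only [saddleForm, Prod.smul_fst, Prod.smul_snd, smul_eq_mul]; ring

theorem HasDerivAt.saddleForm {g : ℝ → ℝ × ℝ} {g' : ℝ × ℝ} {t : ℝ} (h : HasDerivAt g g' t) :
    HasDerivAt (fun τ => _root_.saddleForm (g τ)) ((g t).1 * g'.2 + g'.1 * (g t).2) t := by
  have h₁ := (ContinuousLinearMap.fst ℝ ℝ ℝ).hasFDerivAt.comp_hasDerivAt t h
  have h₂ := (ContinuousLinearMap.snd ℝ ℝ ℝ).hasFDerivAt.comp_hasDerivAt t h
  exact (h₁.mul h₂).congr_deriv (by simp only [Function.comp_apply,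
    ContinuousLinearMap.coe_fst', ContinuousLinearMap.coe_snd']; ring)

end PlanarAlgebra

def HasExponentialDichotomy {E : Type*} [NormedAddCommGroup E] [NormedSpace ℝ E]
    (U : ℝ → ℝ → E →L[ℝ] E) : Prop :=
  ∃ N β : ℝ, 0 < N ∧ 0 < β ∧
    ∃ P : ℝ → E →L[ℝ] E,
      (∀ t : ℝ, ∀ v : E, P t (P t v) = P t v) ∧
      (∀ v : E, Continuous fun t : ℝ => P t v) ∧
      (∀ v : E, ∃ C : ℝ, ∀ t : ℝ, ‖P t v‖ ≤ C) ∧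
      (∀ s t : ℝ, s ≤ t → ∀ v : E, P t (U t s v) = U t s (P s v)) ∧
      (∀ s t : ℝ, s ≤ t →
        Set.BijOn (fun v : E => U t s v)
          (LinearMap.ker (P s : E →ₗ[ℝ] E) : Set E) (LinearMap.ker (P t : E →ₗ[ℝ] E) : Set E)) ∧
      (∀ s t : ℝ, s ≤ t → ∀ v : E, ‖U t s (P s v)‖ ≤ N * Real.exp (-β * (t - s)) * ‖v‖) ∧
      ∃ V : ℝ → ℝ → E → E,
        (∀ s t : ℝ, s ≤ t → ∀ v : E, V s t (U t s (v - P s v)) = v - P s v) ∧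
        (∀ s t : ℝ, s ≤ t → ∀ v : E, U t s (V s t (v - P t v)) = v - P t v) ∧
        (∀ s t : ℝ, s ≤ t → ∀ v : E, ‖V s t (v - P t v)‖ ≤ N * Real.exp (-β * (t - s)) * ‖v‖)

/-- `P t` projects onto the line of `p t` along the line of `q t`, and `U s t` inverts `U t s` on
the line of `q t`. -/
theorem hasExponentialDichotomy_of_transversal_solutions
    {U : ℝ → ℝ → (ℝ × ℝ) →L[ℝ] (ℝ × ℝ)} (hinv : ∀ s t v, U s t (U t s v) = v)
    {p q : ℝ → ℝ × ℝ} (hp : ∀ s t, U t s (p s) = p t) (hq : ∀ s t, U t s (q s) = q t)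
    (hpc : Continuous p) (hqc : Continuous q) {K β θ : ℝ} (hK : 0 < K) (hβ : 0 < β) (hθ : 0 < θ)
    (hwedge : ∀ t, wedge (p t) (q t) ≠ 0)
    (htrans : ∀ t, θ * (‖p t‖ * ‖q t‖) ≤ |wedge (p t) (q t)|)
    (hp_decay : ∀ s t, s ≤ t → ‖p t‖ ≤ K * exp (-β * (t - s)) * ‖p s‖)
    (hq_decay : ∀ s t, s ≤ t → ‖q s‖ ≤ K * exp (-β * (t - s)) * ‖q t‖) :
    HasExponentialDichotomy U := by
  set P := fun t => projAlong (p t) (q t)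
  have hcomm (s t : ℝ) (v : ℝ × ℝ) : P t (U t s v) = U t s (P s v) := by
    have := projAlong_map (U t s) (hwedge s) (by rw [hp, hq]; exact hwedge t) v
    rwa [hp, hq] at this
  have hP_le (t : ℝ) (v : ℝ × ℝ) : ‖P t v‖ ≤ 2 / θ * ‖v‖ :=
    norm_projAlong_le hθ (htrans t) (hwedge t) v
  have hstable {s t : ℝ} (hst : s ≤ t) (α : ℝ) :
      ‖U t s (α • p s)‖ ≤ K * exp (-β * (t - s)) * ‖α • p s‖ := by
    rw [map_smul, hp, norm_smul, norm_smul, mul_left_comm]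
    exact mul_le_mul_of_nonneg_left (hp_decay s t hst) (norm_nonneg _)
  have hunstable {s t : ℝ} (hst : s ≤ t) (γ : ℝ) :
      ‖U s t (γ • q t)‖ ≤ K * exp (-β * (t - s)) * ‖γ • q t‖ := by
    rw [map_smul, hq, norm_smul, norm_smul, mul_left_comm]
    exact mul_le_mul_of_nonneg_left (hq_decay s t hst) (norm_nonneg _)
  refine ⟨K * (1 + 2 / θ), β, by positivity, hβ, P, fun t v => projAlong_projAlong (hwedge t) v,
    fun v => ?_, fun v => ⟨2 / θ * ‖v‖, fun t => hP_le t v⟩, fun s t _ v => hcomm s t v,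
    fun s t _ => ⟨fun v hv => ?_, fun v _ w _ h => ?_, fun w hw => ⟨U s t w, ?_, hinv t s w⟩⟩,
    fun s t hst v => ?_, fun s t w => U s t w, fun s t _ v => hinv s t _,
    fun s t _ v => hinv t s _, fun s t hst v => ?_⟩
  · simp only [P, projAlong_apply]
    exact ((continuous_const.wedge hqc).div (hpc.wedge hqc) hwedge).smul hpc
  · simp only [SetLike.mem_coe, LinearMap.mem_ker, ContinuousLinearMap.coe_coe] at hv ⊢
    rw [hcomm, hv, map_zero]
  · simpa [hinv] using congrArg (U s t) h
  · simp only [SetLike.mem_coe, LinearMap.mem_ker, ContinuousLinearMap.coe_coe] at hw ⊢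
    rw [hcomm, hw, map_zero]
  · calc ‖U t s (P s v)‖ ≤ K * exp (-β * (t - s)) * ‖P s v‖ := by
          simpa only [P, projAlong_apply] using hstable hst _
      _ ≤ K * exp (-β * (t - s)) * ((1 + 2 / θ) * ‖v‖) := by
          gcongr; linarith [hP_le s v, norm_nonneg v]
      _ = K * (1 + 2 / θ) * exp (-β * (t - s)) * ‖v‖ := by ring
  · calc ‖U s t (v - P t v)‖ ≤ K * exp (-β * (t - s)) * ‖v - P t v‖ := by
          simpa only [P, sub_projAlong (hwedge t)] using hunstable hst _
      _ ≤ K * exp (-β * (t - s)) * ((1 + 2 / θ) * ‖v‖) := by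
          gcongr; linarith [norm_sub_le v (P t v), hP_le t v]
      _ = K * (1 + 2 / θ) * exp (-β * (t - s)) * ‖v‖ := by ring

theorem le_sqrt_inv_mul_exp_mul_of_mul_sq_le {θ κ d x y : ℝ} (hθ : 0 < θ)
    (hy : 0 ≤ y) (h : θ * x ^ 2 ≤ exp (-κ * d) * y ^ 2) :
    x ≤ √θ⁻¹ * exp (-(κ / 2) * d) * y := by
  refine le_of_pow_le_pow_left₀ two_ne_zero (by positivity) ?_
  rw [mul_pow, mul_pow, Real.sq_sqrt (by positivity), ← Real.exp_nat_mul]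
  rw [← le_div_iff₀' hθ] at h
  convert h using 1
  rw [div_eq_inv_mul]; ring_nf

theorem exists_norm_eq_one_forall_nonneg_of_surjective {E : Type*} [NormedAddCommGroup E]
    [NormedSpace ℝ E] [ProperSpace E] {φ : E → ℝ} (hφ : Continuous φ)
    (hφ_smul : ∀ (c : ℝ) w, 0 ≤ φ w → 0 ≤ φ (c • w)) {w₀ : E} (hw₀ : w₀ ≠ 0) (hφw₀ : 0 ≤ φ w₀)
    (g : ℕ → E →L[ℝ] E) (hg : ∀ n, Function.Surjective (g n))
    (hanti : ∀ n v, 0 ≤ φ (g (n + 1) v) → 0 ≤ φ (g n v)) :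
    ∃ v, ‖v‖ = 1 ∧ ∀ n, 0 ≤ φ (g n v) := by
  set S : ℕ → Set E := fun n => Metric.sphere 0 1 ∩ {v | 0 ≤ φ (g n v)}
  have hS_closed (n : ℕ) : IsClosed (S n) :=
    Metric.isClosed_sphere.inter (isClosed_le continuous_const (hφ.comp (g n).continuous))
  have hS_nonempty (n : ℕ) : (S n).Nonempty := by
    obtain ⟨w, hw⟩ := hg n w₀
    have hw_ne : w ≠ 0 := by rintro rfl; exact hw₀ (by simpa using hw.symm)
    refine ⟨‖w‖⁻¹ • w, by simp [norm_smul, hw_ne], ?_⟩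
    change 0 ≤ φ (g n (‖w‖⁻¹ • w))
    rw [map_smul, hw]
    exact hφ_smul _ _ hφw₀
  obtain ⟨v, hv⟩ := IsCompact.nonempty_iInter_of_sequence_nonempty_isCompact_isClosed S
    (fun n v hv => ⟨hv.1, hanti n v hv.2⟩) hS_nonempty
    ((isCompact_sphere 0 1).of_isClosed_subset (hS_closed 0) Set.inter_subset_left) hS_closed
  rw [Set.mem_iInter] at hv
  exact ⟨v, by simpa using (hv 0).1, fun n => (hv n).2⟩

namespace IsEvolutionFamily

variable {A : ℝ → (ℝ × ℝ) →L[ℝ] (ℝ × ℝ)} {U : ℝ → ℝ → (ℝ × ℝ) →L[ℝ] (ℝ × ℝ)} {c κ : ℝ}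

theorem monotone_saddleForm_mul_exp (hU : IsEvolutionFamily A U)
    (hcone : ∀ t w, κ * ‖w‖ ^ 2 ≤ w.1 * (A t w).2 + (A t w).1 * w.2) {μ : ℝ} (hμ : |μ| ≤ κ)
    (s : ℝ) (v : ℝ × ℝ) : Monotone fun t => saddleForm (U t s v) * exp (μ * t) := by
  have hd (t : ℝ) : HasDerivAt (fun t => saddleForm (U t s v) * exp (μ * t))
      (((U t s v).1 * (A t (U t s v)).2 + (A t (U t s v)).1 * (U t s v).2
        + μ * saddleForm (U t s v)) * exp (μ * t)) t :=
    ((hU.hasDerivAt s v t).saddleForm.mul ((hasDerivAt_id' t).const_mul μ).exp).congr_deriv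
      (by ring)
  refine monotone_of_deriv_nonneg (fun t => (hd t).differentiableAt) fun t => ?_
  rw [(hd t).deriv]
  have hV := abs_le.mp ((abs_mul μ _).trans_le (mul_le_mul hμ (abs_saddleForm_le (U t s v))
    (abs_nonneg _) ((abs_nonneg _).trans hμ)))
  nlinarith [hcone t (U t s v), exp_pos (μ * t)]

theorem monotone_saddleForm (hU : IsEvolutionFamily A U)
    (hcone : ∀ t w, κ * ‖w‖ ^ 2 ≤ w.1 * (A t w).2 + (A t w).1 * w.2) (hκ : 0 ≤ κ)
    (s : ℝ) (v : ℝ × ℝ) : Monotone fun t => saddleForm (U t s v) := by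
  simpa using hU.monotone_saddleForm_mul_exp hcone (μ := 0) (by simpa using hκ) s v

theorem exp_neg_mul_sq_norm_le (hU : IsEvolutionFamily A U) (hA : ∀ t, ‖A t‖ ≤ c) (s : ℝ)
    (v : ℝ × ℝ) {t ρ : ℝ} (h : |ρ - t| ≤ 1) :
    exp (-(2 * c)) * ‖U t s v‖ ^ 2 ≤ ‖U ρ s v‖ ^ 2 := by
  have hc : 0 ≤ c := (norm_nonneg _).trans (hA 0)
  obtain ⟨h₁, h₂⟩ := abs_le.mp h
  have hle : ‖U t s v‖ ≤ exp c * ‖U ρ s v‖ := by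
    rcases le_total ρ t with hρ | hρ
    · refine (hU.norm_apply_le hA s v hρ).trans (mul_le_mul_of_nonneg_right ?_ (norm_nonneg _))
      exact exp_le_exp.mpr (by nlinarith)
    · refine (hU.norm_apply_le_rev hA s v hρ).trans (mul_le_mul_of_nonneg_right ?_ (norm_nonneg _))
      exact exp_le_exp.mpr (by nlinarith)
  calc exp (-(2 * c)) * ‖U t s v‖ ^ 2 ≤ exp (-(2 * c)) * (exp c * ‖U ρ s v‖) ^ 2 := by gcongr
    _ = ‖U ρ s v‖ ^ 2 := by
      rw [mul_pow, ← mul_assoc, ← Real.exp_nat_mul, ← Real.exp_add]; norm_num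

theorem mul_sub_le_saddleForm_sub (hU : IsEvolutionFamily A U)
    (hcone : ∀ t w, κ * ‖w‖ ^ 2 ≤ w.1 * (A t w).2 + (A t w).1 * w.2) (s : ℝ) (v : ℝ × ℝ)
    {σ τ m : ℝ} (h : σ ≤ τ) (hm : ∀ ρ ∈ Set.Icc σ τ, m ≤ κ * ‖U ρ s v‖ ^ 2) :
    m * (τ - σ) ≤ saddleForm (U τ s v) - saddleForm (U σ s v) := by
  have hd (t : ℝ) := (hU.hasDerivAt s v t).saddleForm
  refine (convex_Icc σ τ).mul_sub_le_image_sub_of_le_deriv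
    (fun t _ => (hd t).continuousAt.continuousWithinAt)
    (fun t _ => (hd t).differentiableAt.differentiableWithinAt) (fun t ht => ?_)
    σ ⟨le_rfl, h⟩ τ ⟨h, le_rfl⟩ h
  rw [(hd t).deriv]
  exact (hm t (interior_subset ht)).trans (hcone t _)

theorem mul_sq_norm_le_neg_saddleForm (hU : IsEvolutionFamily A U) (hA : ∀ t, ‖A t‖ ≤ c)
    (hcone : ∀ t w, κ * ‖w‖ ^ 2 ≤ w.1 * (A t w).2 + (A t w).1 * w.2) (hκ : 0 ≤ κ) {s : ℝ}
    {v : ℝ × ℝ} (hneg : ∀ t, saddleForm (U t s v) ≤ 0) (t : ℝ) :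
    κ * exp (-(2 * c)) * ‖U t s v‖ ^ 2 ≤ -saddleForm (U t s v) := by
  have := hU.mul_sub_le_saddleForm_sub hcone s v (by linarith : t ≤ t + 1)
      (m := κ * exp (-(2 * c)) * ‖U t s v‖ ^ 2) fun ρ hρ => by
    rw [mul_assoc]
    exact mul_le_mul_of_nonneg_left (hU.exp_neg_mul_sq_norm_le hA s v
      (abs_le.mpr ⟨by linarith [hρ.1], by linarith [hρ.2]⟩)) hκ
  linarith [hneg (t + 1)]

theorem mul_sq_norm_le_saddleForm (hU : IsEvolutionFamily A U) (hA : ∀ t, ‖A t‖ ≤ c)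
    (hcone : ∀ t w, κ * ‖w‖ ^ 2 ≤ w.1 * (A t w).2 + (A t w).1 * w.2) (hκ : 0 ≤ κ) {s : ℝ}
    {v : ℝ × ℝ} (hpos : ∀ t, 0 ≤ saddleForm (U t s v)) (t : ℝ) :
    κ * exp (-(2 * c)) * ‖U t s v‖ ^ 2 ≤ saddleForm (U t s v) := by
  have := hU.mul_sub_le_saddleForm_sub hcone s v (by linarith : t - 1 ≤ t)
      (m := κ * exp (-(2 * c)) * ‖U t s v‖ ^ 2) fun ρ hρ => by
    rw [mul_assoc]
    exact mul_le_mul_of_nonneg_left (hU.exp_neg_mul_sq_norm_le hA s v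
      (abs_le.mpr ⟨by linarith [hρ.1], by linarith [hρ.2]⟩)) hκ
  linarith [hpos (t - 1)]

theorem neg_saddleForm_apply_le_exp_mul (hU : IsEvolutionFamily A U)
    (hcone : ∀ t w, κ * ‖w‖ ^ 2 ≤ w.1 * (A t w).2 + (A t w).1 * w.2) (hκ : 0 ≤ κ) (s : ℝ)
    (v : ℝ × ℝ) {σ τ : ℝ} (h : σ ≤ τ) :
    -saddleForm (U τ s v) ≤ exp (-κ * (τ - σ)) * -saddleForm (U σ s v) := by
  have hm := hU.monotone_saddleForm_mul_exp hcone (abs_of_nonneg hκ).le s v h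
  calc -saddleForm (U τ s v)
      = -(saddleForm (U τ s v) * exp (κ * τ)) * exp (-κ * τ) := by
        rw [neg_mul, mul_assoc, ← exp_add]; simp
    _ ≤ -(saddleForm (U σ s v) * exp (κ * σ)) * exp (-κ * τ) := by gcongr
    _ = exp (-κ * (τ - σ)) * -saddleForm (U σ s v) := by
        rw [neg_mul, mul_assoc, ← exp_add]; ring_nf

theorem saddleForm_apply_le_exp_mul (hU : IsEvolutionFamily A U)
    (hcone : ∀ t w, κ * ‖w‖ ^ 2 ≤ w.1 * (A t w).2 + (A t w).1 * w.2) (hκ : 0 ≤ κ) (s : ℝ)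
    (v : ℝ × ℝ) {σ τ : ℝ} (h : σ ≤ τ) :
    saddleForm (U σ s v) ≤ exp (-κ * (τ - σ)) * saddleForm (U τ s v) := by
  have hm := hU.monotone_saddleForm_mul_exp hcone (μ := -κ)
    (by rw [abs_neg, abs_of_nonneg hκ]) s v h
  calc saddleForm (U σ s v) = saddleForm (U σ s v) * exp (-κ * σ) * exp (κ * σ) := by
        rw [mul_assoc, ← exp_add]; simp
    _ ≤ saddleForm (U τ s v) * exp (-κ * τ) * exp (κ * σ) := by gcongr
    _ = exp (-κ * (τ - σ)) * saddleForm (U τ s v) := by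
        rw [mul_assoc, ← exp_add]; ring_nf

theorem norm_apply_le_of_saddleForm_nonpos (hU : IsEvolutionFamily A U) (hA : ∀ t, ‖A t‖ ≤ c)
    (hcone : ∀ t w, κ * ‖w‖ ^ 2 ≤ w.1 * (A t w).2 + (A t w).1 * w.2) (hκ : 0 < κ) {r : ℝ}
    {v : ℝ × ℝ} (hneg : ∀ t, saddleForm (U t r v) ≤ 0) {s t : ℝ} (h : s ≤ t) :
    ‖U t r v‖ ≤ √(κ * exp (-(2 * c)))⁻¹ * exp (-(κ / 2) * (t - s)) * ‖U s r v‖ :=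
  le_sqrt_inv_mul_exp_mul_of_mul_sq_le (by positivity) (norm_nonneg _) <| calc
    κ * exp (-(2 * c)) * ‖U t r v‖ ^ 2 ≤ -saddleForm (U t r v) :=
      hU.mul_sq_norm_le_neg_saddleForm hA hcone hκ.le hneg t
    _ ≤ exp (-κ * (t - s)) * -saddleForm (U s r v) :=
      hU.neg_saddleForm_apply_le_exp_mul hcone hκ.le r v h
    _ ≤ exp (-κ * (t - s)) * ‖U s r v‖ ^ 2 := by
      gcongr; exact (neg_le_abs _).trans (abs_saddleForm_le _)

theorem norm_apply_le_of_saddleForm_nonneg (hU : IsEvolutionFamily A U) (hA : ∀ t, ‖A t‖ ≤ c)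
    (hcone : ∀ t w, κ * ‖w‖ ^ 2 ≤ w.1 * (A t w).2 + (A t w).1 * w.2) (hκ : 0 < κ) {r : ℝ}
    {v : ℝ × ℝ} (hpos : ∀ t, 0 ≤ saddleForm (U t r v)) {s t : ℝ} (h : s ≤ t) :
    ‖U s r v‖ ≤ √(κ * exp (-(2 * c)))⁻¹ * exp (-(κ / 2) * (t - s)) * ‖U t r v‖ :=
  le_sqrt_inv_mul_exp_mul_of_mul_sq_le (by positivity) (norm_nonneg _) <| calc
    κ * exp (-(2 * c)) * ‖U s r v‖ ^ 2 ≤ saddleForm (U s r v) :=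
      hU.mul_sq_norm_le_saddleForm hA hcone hκ.le hpos s
    _ ≤ exp (-κ * (t - s)) * saddleForm (U t r v) :=
      hU.saddleForm_apply_le_exp_mul hcone hκ.le r v h
    _ ≤ exp (-κ * (t - s)) * ‖U t r v‖ ^ 2 := by
      gcongr; exact (le_abs_self _).trans (abs_saddleForm_le _)

theorem exists_forall_saddleForm_nonpos (hU : IsEvolutionFamily A U) (hA : ∀ t, ‖A t‖ ≤ c)
    (hcone : ∀ t w, κ * ‖w‖ ^ 2 ≤ w.1 * (A t w).2 + (A t w).1 * w.2) (hκ : 0 ≤ κ) :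
    ∃ v : ℝ × ℝ, ‖v‖ = 1 ∧ ∀ t, saddleForm (U t 0 v) ≤ 0 := by
  have hmono := hU.monotone_saddleForm hcone hκ 0
  obtain ⟨v, hv, hnonpos⟩ := exists_norm_eq_one_forall_nonneg_of_surjective
    (φ := fun w => -saddleForm w) (by unfold saddleForm; fun_prop)
    (fun c w hw => by rw [saddleForm_smul]; nlinarith [sq_nonneg c]) (w₀ := (1, -1))
    (by simp) (by simp [saddleForm]) (fun n => U n 0) (fun n => hU.surjective hA _ _)
    (fun n v hv => by
      linarith [hmono v (show (n : ℝ) ≤ ((n + 1 : ℕ) : ℝ) by push_cast; linarith)])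
  exact ⟨v, hv, fun t => by linarith [hnonpos ⌈t⌉₊, hmono v (Nat.le_ceil t)]⟩

theorem exists_forall_saddleForm_nonneg (hU : IsEvolutionFamily A U) (hA : ∀ t, ‖A t‖ ≤ c)
    (hcone : ∀ t w, κ * ‖w‖ ^ 2 ≤ w.1 * (A t w).2 + (A t w).1 * w.2) (hκ : 0 ≤ κ) :
    ∃ v : ℝ × ℝ, ‖v‖ = 1 ∧ ∀ t, 0 ≤ saddleForm (U t 0 v) := by
  have hmono := hU.monotone_saddleForm hcone hκ 0
  obtain ⟨v, hv, hnonneg⟩ := exists_norm_eq_one_forall_nonneg_of_surjective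
    (φ := saddleForm) (by unfold saddleForm; fun_prop)
    (fun c w hw => by rw [saddleForm_smul]; positivity) (w₀ := (1, 1))
    (by simp) (by simp [saddleForm]) (fun n => U (-n) 0) (fun n => hU.surjective hA _ _)
    (fun n v hv => by
      linarith [hmono v (show -((n + 1 : ℕ) : ℝ) ≤ -n by push_cast; linarith)])
  exact ⟨v, hv, fun t => by
    linarith [hnonneg ⌈-t⌉₊, hmono v (show -(⌈-t⌉₊ : ℝ) ≤ t by linarith [Nat.le_ceil (-t)])]⟩

theorem hasExponentialDichotomy (hU : IsEvolutionFamily A U) (hA : ∀ t, ‖A t‖ ≤ c)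
    (hκ : 0 < κ) (hcone : ∀ t w, κ * ‖w‖ ^ 2 ≤ w.1 * (A t w).2 + (A t w).1 * w.2) :
    HasExponentialDichotomy U := by
  obtain ⟨p₀, hp₀, hp⟩ := hU.exists_forall_saddleForm_nonpos hA hcone hκ.le
  obtain ⟨q₀, hq₀, hq⟩ := hU.exists_forall_saddleForm_nonneg hA hcone hκ.le
  set θ := κ * exp (-(2 * c))
  have hθ : 0 < θ := by positivity
  have htrans (t : ℝ) : θ * (‖U t 0 p₀‖ * ‖U t 0 q₀‖) ≤ |wedge (U t 0 p₀) (U t 0 q₀)| :=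
    mul_le_abs_wedge hθ.le (hU.mul_sq_norm_le_neg_saddleForm hA hcone hκ.le hp t)
      (hU.mul_sq_norm_le_saddleForm hA hcone hκ.le hq t)
  have hnorm_pos {v : ℝ × ℝ} (hv : ‖v‖ = 1) (t : ℝ) : 0 < ‖U t 0 v‖ := by
    refine norm_pos_iff.mpr fun h => (one_ne_zero : (1 : ℝ) ≠ 0) ?_
    rw [← hv, ← hU.apply_apply_swap hA 0 t v, h, map_zero, norm_zero]
  have hwedge (t : ℝ) : wedge (U t 0 p₀) (U t 0 q₀) ≠ 0 := by
    have := mul_pos hθ (mul_pos (hnorm_pos hp₀ t) (hnorm_pos hq₀ t))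
    exact abs_pos.mp (this.trans_le (htrans t))
  exact hasExponentialDichotomy_of_transversal_solutions (hU.apply_apply_swap hA)
    (fun s t => hU.apply_apply hA 0 s t p₀) (fun s t => hU.apply_apply hA 0 s t q₀)
    (hU.continuous_apply 0 p₀) (hU.continuous_apply 0 q₀) (by positivity) (half_pos hκ) hθ
    hwedge htrans (fun _ _ h => hU.norm_apply_le_of_saddleForm_nonpos hA hcone hκ hp h)
    (fun _ _ h => hU.norm_apply_le_of_saddleForm_nonneg hA hcone hκ hq h)

end IsEvolutionFamily

theorem quadratic_form_nonneg {p q r : ℝ} (hp : 0 ≤ p) (hr : 0 ≤ r) (h : q ^ 2 ≤ 4 * p * r)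
    (X Y : ℝ) : 0 ≤ p * X ^ 2 + q * X * Y + r * Y ^ 2 := by
  rcases hp.eq_or_lt with rfl | hp
  · obtain rfl : q = 0 := pow_eq_zero_iff two_ne_zero |>.mp (by nlinarith [sq_nonneg q])
    nlinarith [mul_nonneg hr (sq_nonneg Y)]
  · nlinarith [sq_nonneg (2 * p * X + q * Y), mul_nonneg (sub_nonneg.2 h) (sq_nonneg Y)]

def lienardField (a b : ℝ → ℝ) (t : ℝ) : (ℝ × ℝ) →L[ℝ] (ℝ × ℝ) :=
  ((-a t) • ContinuousLinearMap.fst ℝ ℝ ℝ + ContinuousLinearMap.snd ℝ ℝ ℝ).prod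
    ((-b t) • ContinuousLinearMap.fst ℝ ℝ ℝ)

section Lienard

variable {a b : ℝ → ℝ} {M δ t : ℝ}

theorem lienardField_apply (w : ℝ × ℝ) :
    lienardField a b t w = (-a t * w.1 + w.2, -b t * w.1) := rfl

theorem norm_lienardField_le (h : |a t| + |b t| ≤ M) : ‖lienardField a b t‖ ≤ M + 1 := by
  refine (lienardField a b t).opNorm_le_bound (by linarith [abs_nonneg (a t), abs_nonneg (b t)])
    fun w => ?_
  have h₁ := norm_fst_le w
  have h₂ := norm_snd_le w
  rw [Real.norm_eq_abs] at h₁ h₂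
  rw [lienardField_apply, Prod.norm_def, Real.norm_eq_abs, Real.norm_eq_abs]
  refine max_le ?_ ?_
  · calc |-a t * w.1 + w.2| ≤ |a t| * |w.1| + |w.2| := by
          simpa [abs_mul] using abs_add_le (-a t * w.1) w.2
      _ ≤ |a t| * ‖w‖ + ‖w‖ := by gcongr
      _ ≤ (M + 1) * ‖w‖ := by nlinarith [abs_nonneg (b t), norm_nonneg w]
  · calc |-b t * w.1| = |b t| * |w.1| := by rw [abs_mul, abs_neg]
      _ ≤ |b t| * ‖w‖ := by gcongr
      _ ≤ (M + 1) * ‖w‖ := by nlinarith [abs_nonneg (a t), norm_nonneg w]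

/-- The smallest eigenvalue of `y² - axy - bx²` is at least determinant over trace,
`(δ / 4) / (1 - b) ≥ δ / (4 (1 + M))`. -/
theorem mul_sq_norm_le_lienardField (hbound : |a t| + |b t| ≤ M) (hδ : 0 ≤ δ)
    (hneg : 4 * b t + a t ^ 2 ≤ -δ) (w : ℝ × ℝ) :
    δ / (4 * (1 + M)) * ‖w‖ ^ 2 ≤
      w.1 * (lienardField a b t w).2 + (lienardField a b t w).1 * w.2 := by
  set κ := δ / (4 * (1 + M))
  have hb := neg_le_abs (b t)
  have hM : 1 ≤ 1 + M := by linarith [abs_nonneg (a t), abs_nonneg (b t)]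
  have hκ : 0 ≤ κ := by positivity
  have hκM : κ * (1 + M) = δ / 4 := by simp only [κ]; field_simp
  have hκδ : κ ≤ δ / 4 := by nlinarith
  have hδM : δ / 4 ≤ M := by nlinarith [sq_nonneg (a t), abs_nonneg (a t)]
  have hbM : 1 - b t ≤ 1 + M := by linarith [abs_nonneg (a t)]
  have hform := quadratic_form_nonneg (p := -b t - κ) (q := -a t) (r := 1 - κ)
    (by nlinarith [sq_nonneg (a t)]) (by nlinarith [sq_nonneg (a t)])
    (by nlinarith [mul_le_mul_of_nonneg_left hbM hκ]) w.1 w.2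
  rw [lienardField_apply]
  nlinarith [sq_norm_le_fst_sq_add_snd_sq w]

end Lienard

theorem lienard_linearization_exponential_dichotomy_general
    (a b : ℝ → ℝ)
    (M δ : ℝ) (hM : 0 < M) (hδ : 0 < δ)
    (hbound : ∀ t : ℝ, |a t| + |b t| ≤ M)
    (hneg : ∀ t : ℝ, 4 * b t + (a t) ^ 2 ≤ -δ)
    (U : ℝ → ℝ → (ℝ × ℝ) →L[ℝ] (ℝ × ℝ))
    (hU_id : ∀ s : ℝ, U s s = ContinuousLinearMap.id ℝ (ℝ × ℝ))
    (hU_ode : ∀ s : ℝ, ∀ v : ℝ × ℝ, ∀ t : ℝ,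
      HasDerivAt (fun τ : ℝ => U τ s v)
        (-(a t) * (U t s v).1 + (U t s v).2, -(b t) * (U t s v).1) t) :
    (∃ Mb ω : ℝ, ∀ s t : ℝ, s ≤ t → ‖U t s‖ ≤ Mb * Real.exp (ω * (t - s))) ∧
    ∃ N β : ℝ, 0 < N ∧ 0 < β ∧
      ∃ P : ℝ → (ℝ × ℝ) →L[ℝ] (ℝ × ℝ),
        (∀ t : ℝ, ∀ v : ℝ × ℝ, P t (P t v) = P t v) ∧
        (∀ v : ℝ × ℝ, Continuous fun t : ℝ => P t v) ∧
        (∀ v : ℝ × ℝ, ∃ C : ℝ, ∀ t : ℝ, ‖P t v‖ ≤ C) ∧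
        (∀ s t : ℝ, s ≤ t → ∀ v : ℝ × ℝ, P t (U t s v) = U t s (P s v)) ∧
        (∀ s t : ℝ, s ≤ t →
          Set.BijOn (fun v : ℝ × ℝ => U t s v)
            (LinearMap.ker (P s : (ℝ × ℝ) →ₗ[ℝ] (ℝ × ℝ)) : Set (ℝ × ℝ))
              (LinearMap.ker (P t : (ℝ × ℝ) →ₗ[ℝ] (ℝ × ℝ)) : Set (ℝ × ℝ))) ∧
        (∀ s t : ℝ, s ≤ t → ∀ v : ℝ × ℝ,
          ‖U t s (P s v)‖ ≤ N * Real.exp (-β * (t - s)) * ‖v‖) ∧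
        ∃ V : ℝ → ℝ → (ℝ × ℝ) → (ℝ × ℝ),
          (∀ s t : ℝ, s ≤ t → ∀ v : ℝ × ℝ,
            V s t (U t s (v - P s v)) = v - P s v) ∧
          (∀ s t : ℝ, s ≤ t → ∀ v : ℝ × ℝ,
            U t s (V s t (v - P t v)) = v - P t v) ∧
          (∀ s t : ℝ, s ≤ t → ∀ v : ℝ × ℝ,
            ‖V s t (v - P t v)‖ ≤ N * Real.exp (-β * (t - s)) * ‖v‖) := by
  have hU : IsEvolutionFamily (lienardField a b) U := ⟨hU_id, hU_ode⟩
  have hA (t : ℝ) : ‖lienardField a b t‖ ≤ M + 1 := norm_lienardField_le (hbound t)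
  refine ⟨⟨1, M + 1, fun s t hst => by simpa using hU.opNorm_le hA hst⟩, ?_⟩
  exact hU.hasExponentialDichotomy hA (by positivity)
    (fun t => mul_sq_norm_le_lienardField (hbound t) hδ.le (hneg t))

/-- the evolution family of the planar linear system
`x' = −a(t)x + y`, `y' = −b(t)x` (arising from the Liénard equation, with
`|a(t)| + |b(t)| ≤ M` and `4b(t) + a(t)² ≤ −δ`) is exponentially bounded and has an
exponential dichotomy. -/
theorem lienard_linearization_exponential_dichotomy
    (a b : ℝ → ℝ) (ha : Continuous a) (hb : Continuous b)
    (M δ : ℝ) (hM : 0 < M) (hδ : 0 < δ)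
    (hbound : ∀ t : ℝ, |a t| + |b t| ≤ M)
    (hneg : ∀ t : ℝ, 4 * b t + (a t) ^ 2 ≤ -δ)
    (U : ℝ → ℝ → (ℝ × ℝ) →L[ℝ] (ℝ × ℝ))
    (hU_id : ∀ s : ℝ, U s s = ContinuousLinearMap.id ℝ (ℝ × ℝ))
    (hU_ode : ∀ s : ℝ, ∀ v : ℝ × ℝ, ∀ t : ℝ,
      HasDerivAt (fun τ : ℝ => U τ s v)
        (-(a t) * (U t s v).1 + (U t s v).2, -(b t) * (U t s v).1) t) :
    (∃ Mb ω : ℝ, ∀ s t : ℝ, s ≤ t → ‖U t s‖ ≤ Mb * Real.exp (ω * (t - s))) ∧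
    ∃ N β : ℝ, 0 < N ∧ 0 < β ∧
      ∃ P : ℝ → (ℝ × ℝ) →L[ℝ] (ℝ × ℝ),
        (∀ t : ℝ, ∀ v : ℝ × ℝ, P t (P t v) = P t v) ∧
        (∀ v : ℝ × ℝ, Continuous fun t : ℝ => P t v) ∧
        (∀ v : ℝ × ℝ, ∃ C : ℝ, ∀ t : ℝ, ‖P t v‖ ≤ C) ∧
        (∀ s t : ℝ, s ≤ t → ∀ v : ℝ × ℝ, P t (U t s v) = U t s (P s v)) ∧
        (∀ s t : ℝ, s ≤ t →
          Set.BijOn (fun v : ℝ × ℝ => U t s v)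
            (LinearMap.ker (P s : (ℝ × ℝ) →ₗ[ℝ] (ℝ × ℝ)) : Set (ℝ × ℝ))
              (LinearMap.ker (P t : (ℝ × ℝ) →ₗ[ℝ] (ℝ × ℝ)) : Set (ℝ × ℝ))) ∧
        (∀ s t : ℝ, s ≤ t → ∀ v : ℝ × ℝ,
          ‖U t s (P s v)‖ ≤ N * Real.exp (-β * (t - s)) * ‖v‖) ∧
        ∃ V : ℝ → ℝ → (ℝ × ℝ) → (ℝ × ℝ),
          (∀ s t : ℝ, s ≤ t → ∀ v : ℝ × ℝ,
            V s t (U t s (v - P s v)) = v - P s v) ∧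
          (∀ s t : ℝ, s ≤ t → ∀ v : ℝ × ℝ,
            U t s (V s t (v - P t v)) = v - P t v) ∧
          (∀ s t : ℝ, s ≤ t → ∀ v : ℝ × ℝ,
            ‖V s t (v - P t v)‖ ≤ N * Real.exp (-β * (t - s)) * ‖v‖) :=
  lienard_linearization_exponential_dichotomy_general a b M δ hM hδ hbound hneg U hU_id hU_ode
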